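/- Let 𝐭 and 𝐮 be infinite sequences over A. Then the infinite Stewart words T(𝐭) and T(𝐮) have arbitrarily long common factors (for every n ≥ 1 there exists a word of length n that occurs as a factor of both T(𝐭) and T(𝐮)) if and only if H(𝐭[i], 𝐮[i]) ∈ {0, 3} for every index i ≥ 0. -/

import Mathlib

/-- The alphabet B = {0, 1, ?}. -/
inductive B : Type
  | b0 : B
  | b1 : B
  | bq : B
deriving DecidableEq, Inhabited, Repr

/-- The six Stewart patterns a = 01?, b = 10?, c = 0?1, d = 1?0, e = ?01, f = ?10. -/
inductive A : Type
  | a : A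
  | b : A
  | c : A
  | d : A
  | e : A
  | f : A
deriving DecidableEq, Inhabited, Repr

open B in
/-- The length-3 word over B associated with a Stewart pattern. -/
def pat : A → List B
  | .a => [b0, b1, bq]
  | .b => [b1, b0, bq]
  | .c => [b0, bq, b1]
  | .d => [b1, bq, b0]
  | .e => [bq, b0, b1]
  | .f => [bq, b1, b0]

/-- Replace the occurrences of `?` in the first word, in order,
by the symbols of the second word. -/
def fill : List B → List B → List B
  | [], _ => []
  | B.bq :: rest, s :: ss => s :: fill rest ss
  | B.bq :: rest, [] => B.bq :: fill rest []
  | x :: rest, ss => x :: fill rest ss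

/-- Helper: the finite Stewart word of the *reverse* of `t`. -/
def Trev : List A → List B
  | [] => [B.bq]
  | g :: t => fill (Trev t ++ Trev t ++ Trev t) (pat g)

/-- The finite Stewart word `T(t)`, of length `3 ^ t.length`:
`T(ε) = ?`, and `T(t g)` is obtained from `T(t)T(t)T(t)` by replacing its
three occurrences of `?`, in order, by the three symbols of the pattern `g`. -/
def stewT (t : List A) : List B := Trev t.reverse

/-- The length-`r` prefix of an infinite sequence of Stewart patterns, as a list. -/
def prefT (t : ℕ → A) (r : ℕ) : List A := List.ofFn (fun i : Fin r => t i)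

/-- The infinite Stewart word `T(𝐭)`: its symbol at position `n` is the eventual
value of `T(t_0 ⋯ t_{r-1})[n]` as `r → ∞`. -/
noncomputable def stewInf (t : ℕ → A) (n : ℕ) : B :=
  Classical.epsilon (fun v : B => ∃ R : ℕ, ∀ r ≥ R, (stewT (prefT t r)).getD n B.bq = v)

/-- `w` occurs as a factor of the infinite word `x`. -/
def FactorOf (w : List B) (x : ℕ → B) : Prop :=
  ∃ i : ℕ, ∀ j : ℕ, j < w.length → w.getD j B.bq = x (i + j)

/-- `w` has period `p ≥ 1`: `w[i] = w[i+p]` for all `0 ≤ i < |w| - p`. -/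
def HasPeriod (w : List B) (p : ℕ) : Prop :=
  1 ≤ p ∧ ∀ i : ℕ, i + p < w.length → w.getD i B.bq = w.getD (i + p) B.bq

/-- The least period `per(w)` of a word. -/
noncomputable def leastPeriod (w : List B) : ℕ := sInf {p | HasPeriod w p}

/-- The exponent `exp(w) = |w| / per(w)` of a word. -/
noncomputable def expo (w : List B) : ℝ := (w.length : ℝ) / (leastPeriod w : ℝ)

/-- The Hamming distance between two Stewart patterns: the number of positions
`p ∈ {0,1,2}` at which the length-3 words differ. -/
def ham (g h : A) : ℕ :=
  (Finset.univ.filter fun p : Fin 3 => (pat g).getD p B.bq ≠ (pat h).getD p B.bq).card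

/-- `t` is ultimately periodic. -/
def UltPeriodic (t : ℕ → A) : Prop :=
  ∃ N : ℕ, ∃ p : ℕ, 1 ≤ p ∧ ∀ n ≥ N, t (n + p) = t n

/-- An infinite word `x` is 3-automatic: there is a finite automaton with output,
reading base-3 representations least-significant-digit first (trailing zeros
allowed), computing `x`. -/
def IsThreeAutomatic (x : ℕ → B) : Prop :=
  ∃ (Q : Type) (_ : Finite Q) (δ : Q → Fin 3 → Q) (q0 : Q) (τ : Q → B),
    ∀ (r : ℕ) (e : Fin r → Fin 3),
      τ (List.foldl δ q0 (List.ofFn fun i => e i)) =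
        x (∑ i : Fin r, (e i).val * 3 ^ (i : ℕ))

-- basic lemmas test
def jdx : A → ℕ
  | .a => 2 | .b => 2 | .c => 1 | .d => 1 | .e => 0 | .f => 0

lemma jdx_lt (g : A) : jdx g < 3 := by cases g <;> simp [jdx]

lemma pat_bq (g : A) (k : ℕ) (hk : k < 3) : (pat g).getD k B.bq = B.bq ↔ k = jdx g := by
  interval_cases k <;> cases g <;> simp [pat, jdx]

lemma pat_ne (g : A) (c1 c2 : ℕ) (h1 : c1 < 3) (h2 : c2 < 3) (hne : c1 ≠ c2)
    (j1 : c1 ≠ jdx g) (j2 : c2 ≠ jdx g) :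
    (pat g).getD c1 B.bq ≠ (pat g).getD c2 B.bq := by
  interval_cases c1 <;> interval_cases c2 <;> cases g <;> simp_all [pat, jdx]

lemma hamc (g h : A) : (ham g h = 0 ∨ ham g h = 3) ↔
    ((pat g).getD ((jdx g + 1) % 3) B.bq = (pat h).getD ((jdx h + 1) % 3) B.bq ∧
     (pat g).getD ((jdx g + 2) % 3) B.bq = (pat h).getD ((jdx h + 2) % 3) B.bq) := by
  cases g <;> cases h <;> decide

lemma ex0 (g : A) : ∃ c, c < 3 ∧ c ≠ jdx g ∧ (pat g).getD c B.bq = B.b0 := by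
  cases g <;> [exact ⟨0, by decide⟩; exact ⟨1, by decide⟩; exact ⟨0, by decide⟩;
    exact ⟨2, by decide⟩; exact ⟨1, by decide⟩; exact ⟨2, by decide⟩]

-- fill lemmas
@[simp] lemma fill_nil (s : List B) : fill [] s = [] := rfl
@[simp] lemma fill_b0 (r : List B) (s : List B) : fill (B.b0 :: r) s = B.b0 :: fill r s := by
  cases s <;> rfl
@[simp] lemma fill_b1 (r : List B) (s : List B) : fill (B.b1 :: r) s = B.b1 :: fill r s := by
  cases s <;> rfl
@[simp] lemma fill_bq_cons (r : List B) (a : B) (ss : List B) :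
    fill (B.bq :: r) (a :: ss) = a :: fill r ss := rfl
@[simp] lemma fill_bq_nil (r : List B) : fill (B.bq :: r) [] = B.bq :: fill r [] := rfl

lemma length_fill (x s : List B) : (fill x s).length = x.length := by
  induction x generalizing s with
  | nil => rfl
  | cons h r ih => cases h <;> cases s <;> simp [ih]
lemma fillg (x s : List B) (n : ℕ) (hn : n < x.length) :
    (fill x s).getD n B.bq =
      if x.getD n B.bq = B.bq then s.getD ((x.take n).count B.bq) B.bq
      else x.getD n B.bq := by
  induction x generalizing s n with
  | nil => simp at hn
  | cons h r ih =>
    cases n with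
    | zero =>
      cases h with
      | b0 => simp
      | b1 => simp
      | bq => cases s <;> simp
    | succ n =>
      have hn' : n < r.length := by simpa using hn
      cases h with
      | b0 => simpa using ih s n hn'
      | b1 => simpa using ih s n hn'
      | bq =>
        cases s with
        | nil =>
          simp only [fill_bq_nil, List.getD_cons_succ, List.take_succ_cons,
            List.count_cons]
          rw [ih [] n hn']
          split <;> simp
        | cons a ss =>
          simp only [fill_bq_cons, List.getD_cons_succ, List.take_succ_cons,
            List.count_cons]
          rw [ih ss n hn']
          split <;> simp [List.getD]
def qrev : List A → ℕ
  | [] => 0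
  | g :: l => jdx g * 3 ^ l.length + qrev l

lemma fill_noq {x : List B} (hx : B.bq ∉ x) (y s : List B) :
    fill (x ++ y) s = x ++ fill y s := by
  induction x with
  | nil => rfl
  | cons h r ih =>
    have hh : h ≠ B.bq := fun e => hx (by simp [e])
    have hr : B.bq ∉ r := fun e => hx (by simp [e])
    cases h <;> simp_all

lemma fill_noq' {x : List B} (hx : B.bq ∉ x) (s : List B) : fill x s = x := by
  have := fill_noq hx [] s; simpa using this

lemma Trev_length (l : List A) : (Trev l).length = 3 ^ l.length := by
  induction l with
  | nil => rfl
  | cons g l ih => simp [Trev, length_fill, ih]; ring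

lemma Trev_decomp (l : List A) : ∃ x1 x2 : List B,
    Trev l = x1 ++ B.bq :: x2 ∧ B.bq ∉ x1 ∧ B.bq ∉ x2 ∧ x1.length = qrev l := by
  induction l with
  | nil => exact ⟨[], [], rfl, by simp, by simp, rfl⟩
  | cons g l ih =>
    obtain ⟨x1, x2, hT, h1, h2, hq⟩ := ih
    have hlen : x1.length + 1 + x2.length = 3 ^ l.length := by
      have := Trev_length l; rw [hT] at this; simp at this; omega
    -- Trev (g::l) = fill (T'++T'++T') (pat g)
    -- pat g cases on jdx
    have key : ∀ s0 s1 s2 : B, pat g = [s0, s1, s2] →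
        Trev (g :: l) = x1 ++ s0 :: (x2 ++ x1) ++ s1 :: (x2 ++ x1) ++ s2 :: x2 := by
      intro s0 s1 s2 hp
      show fill (Trev l ++ Trev l ++ Trev l) (pat g) = _
      rw [hT, hp]
      have e : (x1 ++ B.bq :: x2) ++ (x1 ++ B.bq :: x2) ++ (x1 ++ B.bq :: x2)
          = x1 ++ B.bq :: ((x2 ++ x1) ++ B.bq :: ((x2 ++ x1) ++ B.bq :: x2)) := by
        simp
      rw [e, fill_noq h1, fill_bq_cons,
        fill_noq (by simp [h2, h1]), fill_bq_cons, fill_noq (by simp [h2, h1]), fill_bq_cons]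
      simp [fill_noq' h2]
    have hq3 : qrev (g :: l) = jdx g * 3 ^ l.length + qrev l := rfl
    cases g
    case a =>
      refine ⟨x1 ++ B.b0 :: (x2 ++ x1) ++ B.b1 :: (x2 ++ x1), x2, ?_, ?_, h2, ?_⟩
      · rw [key B.b0 B.b1 B.bq rfl] <;> simp
      · simp [h1, h2]
      · simp [hq3, jdx]; omega
    case b =>
      refine ⟨x1 ++ B.b1 :: (x2 ++ x1) ++ B.b0 :: (x2 ++ x1), x2, ?_, ?_, h2, ?_⟩
      · rw [key B.b1 B.b0 B.bq rfl] <;> simp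
      · simp [h1, h2]
      · simp [hq3, jdx]; omega
    case c =>
      refine ⟨x1 ++ B.b0 :: (x2 ++ x1), (x2 ++ x1) ++ B.b1 :: x2, ?_, ?_, ?_, ?_⟩
      · rw [key B.b0 B.bq B.b1 rfl] <;> simp
      · simp [h1, h2]
      · simp [h1, h2]
      · simp [hq3, jdx]; omega
    case d =>
      refine ⟨x1 ++ B.b1 :: (x2 ++ x1), (x2 ++ x1) ++ B.b0 :: x2, ?_, ?_, ?_, ?_⟩
      · rw [key B.b1 B.bq B.b0 rfl] <;> simp
      · simp [h1, h2]
      · simp [h1, h2]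
      · simp [hq3, jdx]; omega
    case e =>
      refine ⟨x1, (x2 ++ x1) ++ B.b0 :: (x2 ++ x1) ++ B.b1 :: x2, ?_, h1, ?_, ?_⟩
      · rw [key B.bq B.b0 B.b1 rfl] <;> simp
      · simp [h1, h2]
      · simp [hq3, jdx, hq]
    case f =>
      refine ⟨x1, (x2 ++ x1) ++ B.b1 :: (x2 ++ x1) ++ B.b0 :: x2, ?_, h1, ?_, ?_⟩
      · rw [key B.bq B.b1 B.b0 rfl] <;> simp
      · simp [h1, h2]
      · simp [hq3, jdx, hq]
lemma qrev_lt (l : List A) : qrev l < 3 ^ l.length := by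
  obtain ⟨x1, x2, hT, h1, h2, hq⟩ := Trev_decomp l
  have := Trev_length l
  rw [hT] at this; simp at this; omega

lemma Trev_getD_bq (l : List A) (n : ℕ) (hn : n < 3 ^ l.length) :
    ((Trev l).getD n B.bq = B.bq ↔ n = qrev l) := by
  obtain ⟨x1, x2, hT, h1, h2, hq⟩ := Trev_decomp l
  have hlen : x1.length + 1 + x2.length = 3 ^ l.length := by
    have := Trev_length l; rw [hT] at this; simp at this; omega
  rw [hT]
  rcases lt_trichotomy n x1.length with h | h | h
  · rw [List.getD_append _ _ _ _ (by omega)]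
    have : x1.getD n B.bq ∈ x1 := by
      rw [List.getD_eq_getElem _ _ h]; exact List.getElem_mem h
    constructor
    · intro he; exact absurd (he ▸ this) h1
    · omega
  · rw [List.getD_append_right _ _ _ _ (by omega)]
    simp [h, hq]
  · rw [List.getD_append_right _ _ _ _ (by omega)]
    have h3 : n - x1.length = (n - x1.length - 1) + 1 := by omega
    rw [h3, List.getD_cons_succ]
    have hlt : n - x1.length - 1 < x2.length := by omega
    have : x2.getD (n - x1.length - 1) B.bq ∈ x2 := by
      rw [List.getD_eq_getElem _ _ hlt]; exact List.getElem_mem hlt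
    constructor
    · intro he; exact absurd (he ▸ this) h2
    · omega

lemma Trev_take_count (l : List A) (m : ℕ) :
    ((Trev l).take m).count B.bq = if m ≤ qrev l then 0 else 1 := by
  obtain ⟨x1, x2, hT, h1, h2, hq⟩ := Trev_decomp l
  rw [hT, List.take_append, List.count_append]
  have c1 : ∀ k, (x1.take k).count B.bq = 0 := fun k =>
    List.count_eq_zero.2 (fun hm => h1 (List.mem_of_mem_take hm))
  have c2 : ∀ k, (x2.take k).count B.bq = 0 := fun k =>
    List.count_eq_zero.2 (fun hm => h2 (List.mem_of_mem_take hm))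
  rcases le_or_gt m x1.length with h | h
  · have : m - x1.length = 0 := by omega
    rw [this]
    have hle : m ≤ qrev l := by omega
    simp [c1, hle]
  · have h3 : m - x1.length = (m - x1.length - 1) + 1 := by omega
    rw [h3, List.take_succ_cons, List.count_cons]
    have hle : ¬ m ≤ qrev l := by omega
    simp [c1, c2, hle]
def G : List A → ℕ → B
  | [], _ => B.bq
  | g :: l, n =>
      if G l (n % 3 ^ l.length) = B.bq then (pat g).getD (n / 3 ^ l.length) B.bq
      else G l (n % 3 ^ l.length)

lemma G_cons (g : A) (l : List A) (n : ℕ) :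
    G (g :: l) n = if G l (n % 3 ^ l.length) = B.bq then (pat g).getD (n / 3 ^ l.length) B.bq
      else G l (n % 3 ^ l.length) := rfl

lemma triple_getD (T : List B) (L k m : ℕ) (hL : T.length = L) (hm : m < L) (hk : k < 3) :
    ((T ++ T ++ T).getD (L * k + m) B.bq) = T.getD m B.bq := by
  interval_cases k
  · rw [List.append_assoc, List.getD_append _ _ _ _ (by omega)]
    congr 1; omega
  · rw [List.append_assoc, List.getD_append_right _ _ _ _ (by omega),
      List.getD_append _ _ _ _ (by omega)]
    congr 1; omega
  · rw [List.append_assoc, List.getD_append_right _ _ _ _ (by omega),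
      List.getD_append_right _ _ _ _ (by omega)]
    congr 1; omega

lemma triple_take_count (T : List B) (L n : ℕ) (hL : T.length = L) :
    (((T ++ T ++ T).take n).count B.bq) =
      (T.take n).count B.bq + (T.take (n - L)).count B.bq + (T.take (n - 2 * L)).count B.bq := by
  rw [List.append_assoc, List.take_append, List.count_append,
    List.take_append, List.count_append]
  rw [hL]
  have : n - L - L = n - 2 * L := by omega
  rw [this]
  ring

lemma main_getD (l : List A) (n : ℕ) (hn : n < 3 ^ l.length) :
    (Trev l).getD n B.bq = G l n := by
  induction l generalizing n with
  | nil =>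
    have h0 : n = 0 := by simpa using hn
    subst h0; rfl
  | cons g l ih =>
    set L := 3 ^ l.length with hLdef
    have hL0 : 0 < L := Nat.pow_pos (by norm_num)
    have hL : (Trev l).length = L := Trev_length l
    have hn3 : n < 3 * L := by
      have h3 : (3 : ℕ) ^ (g :: l).length = 3 * L := by
        simp only [List.length_cons, pow_succ, hLdef]; ring
      omega
    obtain ⟨k, m, hkm, hm, hk⟩ : ∃ k m, n = L * k + m ∧ m < L ∧ k < 3 := by
      refine ⟨n / L, n % L, (Nat.div_add_mod n L).symm ▸ ?_, Nat.mod_lt _ hL0, ?_⟩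
      · omega
      · exact Nat.div_lt_of_lt_mul (by omega)
    have hq := qrev_lt l
    have hmod : n % L = m := by
      subst hkm; rw [Nat.mul_add_mod, Nat.mod_eq_of_lt hm]
    have hdiv : n / L = k := by
      subst hkm; rw [Nat.mul_add_div hL0, Nat.div_eq_of_lt hm, Nat.add_zero]
    show (fill (Trev l ++ Trev l ++ Trev l) (pat g)).getD n B.bq = _
    rw [fillg _ _ _ (by simp [hL]; omega)]
    rw [hkm, triple_getD _ _ _ _ hL hm hk, ← hkm]
    have hih := ih m hm
    have hchar := Trev_getD_bq l m hm
    rw [G_cons, hmod, hdiv]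
    by_cases hb : G l m = B.bq
    · have hqn : m = qrev l := hchar.1 (by rw [hih]; exact hb)
      rw [hih, if_pos hb, if_pos hb]
      congr 1
      rw [hkm, triple_take_count _ _ _ hL, Trev_take_count, Trev_take_count, Trev_take_count]
      interval_cases k
      · rw [if_pos (by omega), if_pos (by omega), if_pos (by omega)]
      · rw [if_neg (by omega), if_pos (by omega), if_pos (by omega)]
      · rw [if_neg (by omega), if_neg (by omega), if_pos (by omega)]
    · rw [hih, if_neg hb, if_neg hb]
lemma G_concat (l : List A) (g : A) (n : ℕ) (hn : n < 3 * 3 ^ l.length) :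
    G (l ++ [g]) n = if n % 3 = jdx g then G l (n / 3) else (pat g).getD (n % 3) B.bq := by
  induction l generalizing n with
  | nil =>
    show G [g] n = _
    rw [G_cons]
    simp only [List.length_nil, pow_zero, Nat.mod_one, Nat.div_one]
    show (if B.bq = B.bq then _ else _) = _
    rw [if_pos rfl]
    by_cases h : n % 3 = jdx g
    · rw [if_pos h]
      show (pat g).getD n B.bq = B.bq
      have hn3 : n < 3 := by simpa using hn
      rw [pat_bq g n hn3]
      omega
    · rw [if_neg h]
      have hn3 : n < 3 := by simpa using hn
      rw [Nat.mod_eq_of_lt hn3]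
  | cons a l ih =>
    rw [show (a :: l) ++ [g] = a :: (l ++ [g]) from rfl, G_cons]
    have hlen : (l ++ [g]).length = l.length + 1 := by simp
    rw [hlen]
    have e1 : n % 3 ^ (l.length + 1) % 3 = n % 3 := by
      rw [Nat.mod_mod_of_dvd _ (by exact dvd_pow_self 3 (Nat.succ_ne_zero l.length))]
    have e2 : n % 3 ^ (l.length + 1) / 3 = n / 3 % 3 ^ l.length := by
      rw [pow_succ, mul_comm]
      exact Nat.mod_mul_right_div_self n 3 (3 ^ l.length)
    have e3 : n / 3 ^ (l.length + 1) = n / 3 / 3 ^ l.length := by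
      rw [Nat.div_div_eq_div_mul, pow_succ, mul_comm]
    have hmlt : n % 3 ^ (l.length + 1) < 3 * 3 ^ l.length := by
      have h1 := Nat.mod_lt n (y := 3 ^ (l.length + 1)) (Nat.pow_pos (by norm_num))
      have h2 : (3:ℕ) ^ (l.length + 1) = 3 * 3 ^ l.length := by rw [pow_succ]; ring
      omega
    rw [ih _ hmlt, e1, e2, e3]
    by_cases h : n % 3 = jdx g
    · rw [if_pos h, if_pos h, G_cons]
    · rw [if_neg h, if_neg h]
      have hne : (pat g).getD (n % 3) B.bq ≠ B.bq := by
        exact fun he => h ((pat_bq g (n % 3) (Nat.mod_lt n (by norm_num))).1 he)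
      rw [if_neg hne]
def fB : ℕ → (ℕ → A) → ℕ → B
  | 0, _, _ => B.bq
  | r + 1, t, n =>
      if n % 3 = jdx (t 0) then fB r (fun i => t (i + 1)) (n / 3)
      else (pat (t 0)).getD (n % 3) B.bq

lemma prefT_succ (t : ℕ → A) (r : ℕ) :
    prefT t (r + 1) = t 0 :: prefT (fun i => t (i + 1)) r := by
  simp [prefT, List.ofFn_succ]

lemma prefT_length (t : ℕ → A) (r : ℕ) : (prefT t r).length = r := by
  simp [prefT]

lemma gfb (r : ℕ) (t : ℕ → A) (n : ℕ) (hn : n < 3 ^ r) :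
    G ((prefT t r).reverse) n = fB r t n := by
  induction r generalizing t n with
  | zero =>
    have h0 : n = 0 := by simpa using hn
    subst h0; rfl
  | succ r ih =>
    rw [prefT_succ, List.reverse_cons, G_concat _ _ _ (by
      simp [prefT_length]
      have : (3:ℕ) ^ (r+1) = 3 * 3 ^ r := by rw [pow_succ]; ring
      omega)]
    show _ = fB (r + 1) t n
    unfold fB
    by_cases h : n % 3 = jdx (t 0)
    · rw [if_pos h, if_pos h, ih _ _ (by
        have : (3:ℕ) ^ (r+1) = 3 * 3 ^ r := by rw [pow_succ]; ring
        omega)]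
    · rw [if_neg h, if_neg h]

lemma bridge (r : ℕ) (t : ℕ → A) (n : ℕ) (hn : n < 3 ^ r) :
    (stewT (prefT t r)).getD n B.bq = fB r t n := by
  have h1 : (stewT (prefT t r)) = Trev ((prefT t r).reverse) := rfl
  rw [h1, main_getD _ _ (by simpa [prefT_length] using hn), gfb _ _ _ hn]

lemma fB_stab (r : ℕ) (t : ℕ → A) (n : ℕ) (hn : n < 3 ^ r) (hne : fB r t n ≠ B.bq) :
    fB (r + 1) t n = fB r t n := by
  induction r generalizing t n with
  | zero => exact absurd rfl hne
  | succ r ih =>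
    show (if n % 3 = jdx (t 0) then fB (r+1) (fun i => t (i+1)) (n / 3)
        else (pat (t 0)).getD (n % 3) B.bq) = _
    unfold fB at hne ⊢
    by_cases h : n % 3 = jdx (t 0)
    · rw [if_pos h] at hne ⊢
      rw [if_pos h]
      exact ih _ _ (by
        have : (3:ℕ) ^ (r+1) = 3 * 3 ^ r := by rw [pow_succ]; ring
        omega) hne
    · rw [if_neg h, if_neg h]

lemma fB_stab' (r r' : ℕ) (t : ℕ → A) (n : ℕ) (hrr : r ≤ r') (hn : n < 3 ^ r)
    (hne : fB r t n ≠ B.bq) : fB r' t n = fB r t n := by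
  induction r' with
  | zero =>
    have : r = 0 := by omega
    subst this; rfl
  | succ r' ih =>
    rcases Nat.lt_or_ge r (r' + 1) with h | h
    · have hr : r ≤ r' := by omega
      have he := ih hr
      have hn' : n < 3 ^ r' := lt_of_lt_of_le hn (Nat.pow_le_pow_right (by norm_num) hr)
      rw [fB_stab r' t n hn' (he ▸ hne), he]
    · have : r = r' + 1 := by omega
      subst this; rfl
def Plim (t : ℕ → A) (n : ℕ) (v : B) : Prop :=
  ∃ R : ℕ, ∀ r ≥ R, (stewT (prefT t r)).getD n B.bq = v

lemma npow (n r : ℕ) (h : n + 1 ≤ r) : n < 3 ^ r :=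
  lt_of_lt_of_le (Nat.lt_pow_self (a := 3) (n := n) (by norm_num))
    (Nat.pow_le_pow_right (by norm_num) (by omega))

lemma lim_exists (t : ℕ → A) (n : ℕ) : ∃ v, Plim t n v := by
  by_cases h : ∃ r, n < 3 ^ r ∧ fB r t n ≠ B.bq
  · obtain ⟨r0, hr0, hne⟩ := h
    refine ⟨fB r0 t n, r0, fun r hr => ?_⟩
    have hn : n < 3 ^ r := lt_of_lt_of_le hr0 (Nat.pow_le_pow_right (by norm_num) hr)
    rw [bridge r t n hn, fB_stab' r0 r t n hr hr0 hne]
  · push_neg at h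
    refine ⟨B.bq, n + 1, fun r hr => ?_⟩
    have hn : n < 3 ^ r := npow n r hr
    rw [bridge r t n hn]
    by_contra hne
    exact hne (h r hn)

lemma lim_unique {t : ℕ → A} {n : ℕ} {v v' : B} (h : Plim t n v) (h' : Plim t n v') :
    v = v' := by
  obtain ⟨R, hR⟩ := h
  obtain ⟨R', hR'⟩ := h'
  rw [← hR (max R R') (le_max_left _ _), ← hR' (max R R') (le_max_right _ _)]

lemma stewInf_spec (t : ℕ → A) (n : ℕ) : Plim t n (stewInf t n) :=
  Classical.epsilon_spec (lim_exists t n)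

lemma stewInf_eq_of_P {t : ℕ → A} {n : ℕ} {v : B} (h : Plim t n v) : stewInf t n = v :=
  lim_unique (stewInf_spec t n) h

lemma stew_rec (t : ℕ → A) (n : ℕ) :
    stewInf t n = if n % 3 = jdx (t 0) then stewInf (fun i => t (i + 1)) (n / 3)
      else (pat (t 0)).getD (n % 3) B.bq := by
  by_cases h : n % 3 = jdx (t 0)
  · rw [if_pos h]
    apply stewInf_eq_of_P
    obtain ⟨R, hR⟩ := stewInf_spec (fun i => t (i + 1)) (n / 3)
    refine ⟨max R (n + 1) + 1, fun r hr => ?_⟩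
    obtain ⟨s, rfl⟩ : ∃ s, r = s + 1 := ⟨r - 1, by omega⟩
    have hs : s ≥ max R (n + 1) := by omega
    have hn : n < 3 ^ (s + 1) := npow n (s + 1) (by omega)
    have hn3 : n / 3 < 3 ^ s := by
      have := npow n s (by omega); omega
    rw [bridge _ t n hn]
    show (if n % 3 = jdx (t 0) then fB s (fun i => t (i+1)) (n / 3)
      else (pat (t 0)).getD (n % 3) B.bq) = _
    rw [if_pos h, ← bridge s _ _ hn3]
    exact hR s (by omega)
  · rw [if_neg h]
    apply stewInf_eq_of_P
    refine ⟨n + 1, fun r hr => ?_⟩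
    obtain ⟨s, rfl⟩ : ∃ s, r = s + 1 := ⟨r - 1, by omega⟩
    rw [bridge _ t n (npow n (s+1) hr)]
    show (if n % 3 = jdx (t 0) then fB s (fun i => t (i+1)) (n / 3)
      else (pat (t 0)).getD (n % 3) B.bq) = _
    rw [if_neg h]
lemma val_of_ne (t : ℕ → A) (n : ℕ) (h : n % 3 ≠ jdx (t 0)) :
    stewInf t n = (pat (t 0)).getD (n % 3) B.bq := by rw [stew_rec, if_neg h]

lemma val_of_eq (t : ℕ → A) (n : ℕ) (h : n % 3 = jdx (t 0)) :
    stewInf t n = stewInf (fun i => t (i + 1)) (n / 3) := by rw [stew_rec, if_pos h]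

lemma const3 (t : ℕ → A) (m : ℕ) :
    ¬ (stewInf t m = stewInf t (m + 1) ∧ stewInf t (m + 1) = stewInf t (m + 2)) := by
  rintro ⟨h1, h2⟩
  have hj : jdx (t 0) < 3 := jdx_lt (t 0)
  set j := jdx (t 0) with hjdef
  have hall : ∀ d, d ≤ 2 → stewInf t (m + d) = stewInf t m := by
    intro d hd
    interval_cases d
    · rfl
    · exact h1.symm
    · exact (h1.trans h2).symm
  obtain ⟨d1, hd1, hr1⟩ : ∃ d, d ≤ 2 ∧ (m + d) % 3 = (j + 1) % 3 :=
    ⟨(j + 1 + 3 - m % 3) % 3, by omega, by omega⟩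
  obtain ⟨d2, hd2, hr2⟩ : ∃ d, d ≤ 2 ∧ (m + d) % 3 = (j + 2) % 3 :=
    ⟨(j + 2 + 3 - m % 3) % 3, by omega, by omega⟩
  have v1 : stewInf t (m + d1) = (pat (t 0)).getD ((j + 1) % 3) B.bq := by
    rw [val_of_ne t (m + d1) (by omega), hr1]
  have v2 : stewInf t (m + d2) = (pat (t 0)).getD ((j + 2) % 3) B.bq := by
    rw [val_of_ne t (m + d2) (by omega), hr2]
  have : (pat (t 0)).getD ((j + 1) % 3) B.bq = (pat (t 0)).getD ((j + 2) % 3) B.bq := by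
    rw [← v1, ← v2, hall d1 hd1, hall d2 hd2]
  exact pat_ne (t 0) ((j + 1) % 3) ((j + 2) % 3) (by omega) (by omega) (by omega)
    (by omega) (by omega) this
lemma win (r : ℕ) (t u : ℕ → A) (h : ∀ i, ham (t i) (u i) = 0 ∨ ham (t i) (u i) = 3) :
    ∃ i i', ∀ p, p < 3 ^ r → stewInf t (i + p) = stewInf u (i' + p) := by
  induction r generalizing t u with
  | zero =>
    obtain ⟨c, hc3, hcj, hc0⟩ := ex0 (t 0)
    obtain ⟨c', hc3', hcj', hc0'⟩ := ex0 (u 0)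
    refine ⟨c, c', fun p hp => ?_⟩
    have hp0 : p = 0 := by simpa using hp
    subst hp0
    rw [Nat.add_zero, Nat.add_zero, val_of_ne t c (by rwa [Nat.mod_eq_of_lt hc3]),
      val_of_ne u c' (by rwa [Nat.mod_eq_of_lt hc3']),
      Nat.mod_eq_of_lt hc3, Nat.mod_eq_of_lt hc3', hc0, hc0']
  | succ r ih =>
    obtain ⟨i, i', hw⟩ := ih (fun k => t (k + 1)) (fun k => u (k + 1)) (fun k => h (k + 1))
    set j := jdx (t 0) with hjdef
    set j' := jdx (u 0) with hjdef'
    have hj : j < 3 := jdx_lt _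
    have hj' : j' < 3 := jdx_lt _
    have hcyc := (hamc (t 0) (u 0)).1 (h 0)
    refine ⟨3 * i + j, 3 * i' + j', fun p hp => ?_⟩
    have hp3 : p / 3 < 3 ^ r := by
      have : (3:ℕ) ^ (r + 1) = 3 * 3 ^ r := by rw [pow_succ]; ring
      omega
    have h3 : p % 3 = 0 ∨ p % 3 = 1 ∨ p % 3 = 2 := by omega
    rcases h3 with hd | hd | hd
    · -- p ≡ 0 [3]
      have e1 : (3 * i + j + p) % 3 = j := by omega
      have e2 : (3 * i' + j' + p) % 3 = j' := by omega
      rw [val_of_eq t _ (by rw [e1]), val_of_eq u _ (by rw [e2])]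
      have q1 : (3 * i + j + p) / 3 = i + p / 3 := by omega
      have q2 : (3 * i' + j' + p) / 3 = i' + p / 3 := by omega
      rw [q1, q2]
      exact hw (p / 3) hp3
    · -- p ≡ 1 [3]
      have e1 : (3 * i + j + p) % 3 = (j + 1) % 3 := by omega
      have e2 : (3 * i' + j' + p) % 3 = (j' + 1) % 3 := by omega
      rw [val_of_ne t _ (by rw [e1]; omega), val_of_ne u _ (by rw [e2]; omega), e1, e2]
      exact hcyc.1
    · -- p ≡ 2 [3]
      have e1 : (3 * i + j + p) % 3 = (j + 2) % 3 := by omega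
      have e2 : (3 * i' + j' + p) % 3 = (j' + 2) % 3 := by omega
      rw [val_of_ne t _ (by rw [e1]; omega), val_of_ne u _ (by rw [e2]; omega), e1, e2]
      exact hcyc.2
lemma core (n : ℕ) (hn : 3 ≤ n) (t u : ℕ → A) (i i' : ℕ)
    (hw : ∀ p, p < 3 * n + 3 → stewInf t (i + p) = stewInf u (i' + p)) :
    (ham (t 0) (u 0) = 0 ∨ ham (t 0) (u 0) = 3) ∧
    ∃ I I', ∀ k, k < n →
      stewInf (fun m => t (m + 1)) (I + k) = stewInf (fun m => u (m + 1)) (I' + k) := by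
  set j := jdx (t 0) with hjdef
  set j' := jdx (u 0) with hjdef'
  have hj : j < 3 := jdx_lt _
  have hj' : j' < 3 := jdx_lt _
  set P := (j + 3 - i % 3) % 3 with hPdef
  set P' := (j' + 3 - i' % 3) % 3 with hPdef'
  have hP3 : P < 3 := by omega
  have hP3' : P' < 3 := by omega
  have hP : (i + P) % 3 = j := by omega
  have hP' : (i' + P') % 3 = j' := by omega
  by_cases hPP : P = P'
  · constructor
    · apply (hamc _ _).2
      constructor
      · have e1 : (i + (P + 1)) % 3 = (j + 1) % 3 := by omega
        have e2 : (i' + (P + 1)) % 3 = (j' + 1) % 3 := by omega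
        have := hw (P + 1) (by omega)
        rwa [val_of_ne t _ (by rw [e1]; omega), val_of_ne u _ (by rw [e2]; omega),
          e1, e2] at this
      · have e1 : (i + (P + 2)) % 3 = (j + 2) % 3 := by omega
        have e2 : (i' + (P + 2)) % 3 = (j' + 2) % 3 := by omega
        have := hw (P + 2) (by omega)
        rwa [val_of_ne t _ (by rw [e1]; omega), val_of_ne u _ (by rw [e2]; omega),
          e1, e2] at this
    · refine ⟨(i + P) / 3, (i' + P) / 3, fun k hk => ?_⟩
      have := hw (P + 3 * k) (by omega)
      rw [val_of_eq t _ (by omega), val_of_eq u _ (by omega)] at this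
      have q1 : (i + (P + 3 * k)) / 3 = (i + P) / 3 + k := by omega
      have q2 : (i' + (P + 3 * k)) / 3 = (i' + P) / 3 + k := by omega
      rwa [q1, q2] at this
  · exfalso
    have hc : (i + P') % 3 ≠ j := by omega
    have key : ∀ k, k < 3 →
        stewInf (fun m => u (m + 1)) ((i' + P') / 3 + k) = (pat (t 0)).getD ((i + P') % 3) B.bq := by
      intro k hk
      have := hw (P' + 3 * k) (by omega)
      rw [val_of_ne t _ (by omega), val_of_eq u _ (by omega)] at this
      have q2 : (i' + (P' + 3 * k)) / 3 = (i' + P') / 3 + k := by omega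
      have e1 : (i + (P' + 3 * k)) % 3 = (i + P') % 3 := by omega
      rw [q2, e1] at this
      exact this.symm
    have k0 := key 0 (by norm_num)
    have k1 := key 1 (by norm_num)
    have k2 := key 2 (by norm_num)
    rw [Nat.add_zero] at k0
    exact const3 (fun m => u (m + 1)) ((i' + P') / 3) ⟨k0.trans k1.symm, k1.trans k2.symm⟩
lemma all_ham : ∀ (m : ℕ) (t u : ℕ → A),
    (∀ n : ℕ, ∃ i i', ∀ p, p < n → stewInf t (i + p) = stewInf u (i' + p)) →
    (ham (t m) (u m) = 0 ∨ ham (t m) (u m) = 3) := by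
  intro m
  induction m with
  | zero =>
    intro t u H
    obtain ⟨i, i', hw⟩ := H 12
    exact (core 3 (le_refl 3) t u i i' (fun p hp => hw p (by omega))).1
  | succ m ih =>
    intro t u H
    have Hσ : ∀ n : ℕ, ∃ I I', ∀ p, p < n →
        stewInf (fun k => t (k + 1)) (I + p) = stewInf (fun k => u (k + 1)) (I' + p) := by
      intro n
      obtain ⟨i, i', hw⟩ := H (3 * (max n 3) + 3)
      obtain ⟨-, I, I', hI⟩ := core (max n 3) (le_max_right _ _) t u i i' hw
      exact ⟨I, I', fun p hp => hI p (lt_of_lt_of_le hp (le_max_left _ _))⟩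
    exact ih (fun k => t (k + 1)) (fun k => u (k + 1)) Hσ

theorem stmt_14 (t u : ℕ → A) :
    (∀ n : ℕ, 1 ≤ n → ∃ w : List B, w.length = n ∧
        FactorOf w (stewInf t) ∧ FactorOf w (stewInf u)) ↔
      (∀ i : ℕ, ham (t i) (u i) = 0 ∨ ham (t i) (u i) = 3) := by
  constructor
  · intro Hf m
    apply all_ham m t u
    intro n
    rcases Nat.eq_zero_or_pos n with h0 | h1
    · exact ⟨0, 0, fun p hp => absurd hp (by omega)⟩
    · obtain ⟨w, hlen, ⟨a, ha⟩, ⟨b, hb⟩⟩ := Hf n h1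
      exact ⟨a, b, fun p hp =>
        ((ha p (hlen ▸ hp)).symm.trans (hb p (hlen ▸ hp)) : _)⟩
  · intro H n hn
    obtain ⟨i, i', hw⟩ := win n t u H
    have hn3 : n ≤ 3 ^ n := le_of_lt (Nat.lt_pow_self (a := 3) (n := n) (by norm_num))
    refine ⟨List.ofFn (fun p : Fin n => stewInf t (i + p)), by simp, ⟨i, fun p hp => ?_⟩,
      ⟨i', fun p hp => ?_⟩⟩
    · have hp' : p < n := by simpa using hp
      rw [List.getD_eq_getElem _ _ (by simpa using hp')]
      simp
    · have hp' : p < n := by simpa using hp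
      rw [List.getD_eq_getElem _ _ (by simpa using hp')]
      simp only [List.getElem_ofFn]
      exact hw p (by omega)
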